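/- Let $0<p<1$, $r>0$, $k\ge 0$, $l>0$, and let $x>0$ satisfy $kx+l>0$. Define $g(x,\theta):=\sup_{c\ge kx+l}\left(\frac{c^p}{p}-c\theta\right)+rx\theta$ for $\theta>0$. Then: (i) $g(x,\theta)=\frac{1-p}{p}\theta^{p/(p-1)}+rx\theta$ if $\theta^{1/(p-1)}\ge kx+l$, and $g(x,\theta)=\frac{(kx+l)^p}{p}+((r-k)x-l)\theta$ if $\theta^{1/(p-1)}\le kx+l$; (ii) $\theta\mapsto g(x,\theta)$ is convex on $(0,\infty)$; (iii) if $(r-k)x>l$, then $\theta\mapsto g(x,\theta)$ is not constant on any nondegenerate open subinterval of $(0,\infty)$. -/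

import Mathlib

/-! The supremum defining `G p u θ` is attained at `argmaxG p u θ`: the critical point
`θ ^ (1 / (p - 1))` of the concave function `c ↦ c ^ p / p - c θ`, clamped to the constraint
`u ≤ c`. Hence `G p u ⋅` is a supremum of affine functions of `θ` whose supporting line at `θ`
has slope `-argmaxG p u θ`. This gives the explicit formulas and convexity. If `g = G p u + s ⋅`
were constant on an interval, comparing supporting lines at neighbouring points would force
`argmaxG p u θ = s` throughout the interval; for `s > u` this pins down `θ = s ^ (p - 1)`. -/

open Real Set

/-- `G p u θ = sup_{c ≥ u} (c^p/p - c θ)`. -/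
noncomputable def G (p u θ : ℝ) : ℝ :=
  sSup ((fun c : ℝ => c ^ p / p - c * θ) '' {c : ℝ | u ≤ c})

noncomputable def argmaxG (p u θ : ℝ) : ℝ := max u (θ ^ (1 / (p - 1)))

lemma rpow_le_tangent {p a c : ℝ} (hp0 : 0 ≤ p) (hp1 : p ≤ 1) (ha : 0 < a) (hc : 0 ≤ c) :
    c ^ p ≤ a ^ p + p * a ^ (p - 1) * (c - a) := by
  have bernoulli : (c / a) ^ p ≤ 1 + p * (c / a - 1) := by
    simpa using rpow_one_add_le_one_add_mul_self (s := c / a - 1)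
      (by linarith [div_nonneg hc ha.le]) hp0 hp1
  have hap : a ^ (p - 1) = a ^ p / a := by rw [rpow_sub ha, rpow_one]
  calc c ^ p = (c / a) ^ p * a ^ p := by
        rw [← mul_rpow (div_nonneg hc ha.le) ha.le, div_mul_cancel₀ _ ha.ne']
    _ ≤ (1 + p * (c / a - 1)) * a ^ p := by gcongr
    _ = a ^ p + p * a ^ (p - 1) * (c - a) := by rw [hap]; field_simp

section

variable {p u θ : ℝ}

lemma argmaxG_pos (hu : 0 < u) : 0 < argmaxG p u θ :=
  hu.trans_le (le_max_left _ _)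

lemma argmaxG_rpow_le (hp1 : p < 1) (hθ : 0 < θ) : argmaxG p u θ ^ (p - 1) ≤ θ := by
  calc argmaxG p u θ ^ (p - 1) ≤ (θ ^ (1 / (p - 1))) ^ (p - 1) :=
        rpow_le_rpow_of_nonpos (rpow_pos_of_pos hθ _) (le_max_right _ _) (by linarith)
    _ = θ := by rw [← rpow_mul hθ.le, one_div_mul_cancel (by linarith), rpow_one]

lemma isGreatest_G (hp0 : 0 < p) (hp1 : p < 1) (hu : 0 < u) (hθ : 0 < θ) :
    IsGreatest ((fun c : ℝ => c ^ p / p - c * θ) '' {c : ℝ | u ≤ c})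
      (argmaxG p u θ ^ p / p - argmaxG p u θ * θ) := by
  set m := argmaxG p u θ
  refine ⟨⟨m, show u ≤ m from le_max_left _ _, rfl⟩, ?_⟩
  rintro _ ⟨c, hc : u ≤ c, rfl⟩
  have hm : 0 < m := argmaxG_pos hu
  have tangent := rpow_le_tangent hp0.le hp1.le hm (hu.le.trans hc)
  -- the tangent slope `m ^ (p - 1)` is `θ` unless the constraint binds, and then `m = u ≤ c`
  have hslope : m ^ (p - 1) * (c - m) ≤ θ * (c - m) := by
    rcases max_cases u (θ ^ (1 / (p - 1))) with ⟨hm, -⟩ | ⟨hm, -⟩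
    · have hmc : m = u := hm
      exact mul_le_mul_of_nonneg_right (argmaxG_rpow_le hp1 hθ) (by linarith)
    · have hmθ : m = θ ^ (1 / (p - 1)) := hm
      rw [hmθ, ← rpow_mul hθ.le, one_div_mul_cancel (by linarith), rpow_one]
  show c ^ p / p - c * θ ≤ m ^ p / p - m * θ
  rw [div_sub' hp0.ne', div_sub' hp0.ne', div_le_div_iff_of_pos_right hp0]
  nlinarith

lemma G_eq (hp0 : 0 < p) (hp1 : p < 1) (hu : 0 < u) (hθ : 0 < θ) :
    G p u θ = argmaxG p u θ ^ p / p - argmaxG p u θ * θ :=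
  (isGreatest_G hp0 hp1 hu hθ).csSup_eq

lemma le_G (hp0 : 0 < p) (hp1 : p < 1) (hu : 0 < u) (hθ : 0 < θ) {c : ℝ} (hc : u ≤ c) :
    c ^ p / p - c * θ ≤ G p u θ :=
  le_csSup (isGreatest_G hp0 hp1 hu hθ).bddAbove ⟨c, hc, rfl⟩

lemma G_of_le_rpow (hp0 : 0 < p) (hp1 : p < 1) (hu : 0 < u) (hθ : 0 < θ)
    (h : u ≤ θ ^ (1 / (p - 1))) : G p u θ = (1 - p) / p * θ ^ (p / (p - 1)) := by
  have hp1' : p - 1 ≠ 0 := by linarith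
  have hpow : (θ ^ (1 / (p - 1))) ^ p = θ ^ (p / (p - 1)) := by
    rw [← rpow_mul hθ.le, one_div_mul_eq_div]
  have hmul : θ ^ (1 / (p - 1)) * θ = θ ^ (p / (p - 1)) := by
    rw [← rpow_add_one hθ.ne']
    congr 1
    field_simp
    ring
  rw [G_eq hp0 hp1 hu hθ, argmaxG, max_eq_right h, hpow, hmul]
  field_simp

lemma G_of_rpow_le (hp0 : 0 < p) (hp1 : p < 1) (hu : 0 < u) (hθ : 0 < θ)
    (h : θ ^ (1 / (p - 1)) ≤ u) : G p u θ = u ^ p / p - u * θ := by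
  rw [G_eq hp0 hp1 hu hθ, argmaxG, max_eq_left h]

lemma G_sub_G_le (hp0 : 0 < p) (hp1 : p < 1) (hu : 0 < u) (hθ : 0 < θ) {θ' : ℝ}
    (hθ' : 0 < θ') : G p u θ - G p u θ' ≤ argmaxG p u θ * (θ' - θ) := by
  have := le_G hp0 hp1 hu hθ' (le_max_left u (θ ^ (1 / (p - 1))))
  rw [G_eq hp0 hp1 hu hθ]
  unfold argmaxG at this ⊢
  linarith

lemma convexOn_G (hp0 : 0 < p) (hp1 : p < 1) (hu : 0 < u) : ConvexOn ℝ (Ioi 0) (G p u) := by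
  refine ⟨convex_Ioi 0, fun θ₁ hθ₁ θ₂ hθ₂ a b ha hb hab => ?_⟩
  have hz : 0 < a • θ₁ + b • θ₂ := convex_Ioi 0 hθ₁ hθ₂ ha hb hab
  have h₁ := G_sub_G_le hp0 hp1 hu hz hθ₁
  have h₂ := G_sub_G_le hp0 hp1 hu hz hθ₂
  simp only [smul_eq_mul] at hz h₁ h₂ ⊢
  obtain rfl : b = 1 - a := by linarith
  nlinarith [mul_le_mul_of_nonneg_left h₁ ha, mul_le_mul_of_nonneg_left h₂ hb]

variable {s θ₁ θ₂ : ℝ}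

lemma argmaxG_le_of_G_add_mul_eq (hp0 : 0 < p) (hp1 : p < 1) (hu : 0 < u) (hθ₁ : 0 < θ₁)
    (h₁₂ : θ₁ < θ₂) (h : G p u θ₁ + s * θ₁ = G p u θ₂ + s * θ₂) : argmaxG p u θ₂ ≤ s := by
  have := G_sub_G_le hp0 hp1 hu (hθ₁.trans h₁₂) hθ₁
  nlinarith

lemma le_argmaxG_of_G_add_mul_eq (hp0 : 0 < p) (hp1 : p < 1) (hu : 0 < u) (hθ₁ : 0 < θ₁)
    (h₁₂ : θ₁ < θ₂) (h : G p u θ₁ + s * θ₁ = G p u θ₂ + s * θ₂) : s ≤ argmaxG p u θ₁ := by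
  have := G_sub_G_le hp0 hp1 hu hθ₁ (hθ₁.trans h₁₂)
  nlinarith

lemma eq_rpow_of_argmaxG_eq (hp1 : p < 1) (hθ : 0 < θ) (hus : u < s) (h : argmaxG p u θ = s) :
    θ = s ^ (p - 1) := by
  have hs : θ ^ (1 / (p - 1)) = s := by
    rcases max_cases u (θ ^ (1 / (p - 1))) with ⟨hm, -⟩ | ⟨hm, -⟩
    · exact absurd (hm.symm.trans h) hus.ne
    · exact hm.symm.trans h
  rw [← hs, ← rpow_mul hθ.le, one_div_mul_cancel (by linarith), rpow_one]

lemma exists_ne_G_add_mul (hp0 : 0 < p) (hp1 : p < 1) (hu : 0 < u) (hus : u < s) {a b : ℝ}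
    (ha : 0 ≤ a) (hab : a < b) :
    ∃ θ₁ ∈ Ioo a b, ∃ θ₂ ∈ Ioo a b, G p u θ₁ + s * θ₁ ≠ G p u θ₂ + s * θ₂ := by
  by_contra! hconst
  have hrpow : ∀ θ ∈ Ioo a b, θ = s ^ (p - 1) := by
    rintro θ ⟨haθ, hθb⟩
    refine eq_rpow_of_argmaxG_eq hp1 (by linarith) hus (le_antisymm ?_ ?_)
    · exact argmaxG_le_of_G_add_mul_eq hp0 hp1 hu (θ₁ := (a + θ) / 2) (by linarith)
        (by linarith) (hconst _ ⟨by linarith, by linarith⟩ _ ⟨haθ, hθb⟩)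
    · exact le_argmaxG_of_G_add_mul_eq hp0 hp1 hu (θ₂ := (θ + b) / 2) (by linarith)
        (by linarith) (hconst _ ⟨haθ, hθb⟩ _ ⟨by linarith, by linarith⟩)
  have h₁ := hrpow ((2 * a + b) / 3) ⟨by linarith, by linarith⟩
  have h₂ := hrpow ((a + 2 * b) / 3) ⟨by linarith, by linarith⟩
  linarith

end

theorem stmt_2_general (p r k l x : ℝ) (hp0 : 0 < p) (hp1 : p < 1) (hkxl : 0 < k * x + l) :
    (∀ θ : ℝ, 0 < θ →
      (k * x + l ≤ θ ^ (1 / (p - 1)) →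
        G p (k * x + l) θ + r * x * θ = (1 - p) / p * θ ^ (p / (p - 1)) + r * x * θ) ∧
      (θ ^ (1 / (p - 1)) ≤ k * x + l →
        G p (k * x + l) θ + r * x * θ = (k * x + l) ^ p / p + ((r - k) * x - l) * θ)) ∧
    ConvexOn ℝ (Ioi 0) (fun θ => G p (k * x + l) θ + r * x * θ) ∧
    ((r - k) * x > l → ∀ a b : ℝ, 0 ≤ a → a < b →
      ∃ θ₁ ∈ Ioo a b, ∃ θ₂ ∈ Ioo a b,
        G p (k * x + l) θ₁ + r * x * θ₁ ≠ G p (k * x + l) θ₂ + r * x * θ₂) := by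
  refine ⟨fun θ hθ => ⟨fun h => ?_, fun h => ?_⟩, ?_, fun hrkl a b ha hab => ?_⟩
  · rw [G_of_le_rpow hp0 hp1 hkxl hθ h]
  · rw [G_of_rpow_le hp0 hp1 hkxl hθ h]
    ring
  · exact (convexOn_G hp0 hp1 hkxl).add ((LinearMap.mul ℝ ℝ (r * x)).convexOn (convex_Ioi 0))
  · exact exists_ne_G_add_mul hp0 hp1 hkxl (by linarith) ha hab

/-- properties of `g(x,θ) = sup_{c ≥ kx+l} (c^p/p - cθ) + r x θ`:
(i) explicit formulas in the two cases, (ii) convexity in `θ` on `(0,∞)`,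
(iii) if `(r-k)x > l` then `θ ↦ g(x,θ)` is not constant on any nondegenerate
open subinterval of `(0,∞)`. -/
theorem stmt_2 (p r k l x : ℝ) (hp0 : 0 < p) (hp1 : p < 1) (hr : 0 < r) (hk : 0 ≤ k)
    (hl : 0 < l) (hx : 0 < x) (hkxl : 0 < k * x + l) :
    (∀ θ : ℝ, 0 < θ →
      (k * x + l ≤ θ ^ (1 / (p - 1)) →
        G p (k * x + l) θ + r * x * θ = (1 - p) / p * θ ^ (p / (p - 1)) + r * x * θ) ∧
      (θ ^ (1 / (p - 1)) ≤ k * x + l →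
        G p (k * x + l) θ + r * x * θ = (k * x + l) ^ p / p + ((r - k) * x - l) * θ)) ∧
    ConvexOn ℝ (Ioi 0) (fun θ => G p (k * x + l) θ + r * x * θ) ∧
    ((r - k) * x > l → ∀ a b : ℝ, 0 ≤ a → a < b →
      ∃ θ₁ ∈ Ioo a b, ∃ θ₂ ∈ Ioo a b,
        G p (k * x + l) θ₁ + r * x * θ₁ ≠ G p (k * x + l) θ₂ + r * x * θ₂) :=
  stmt_2_general p r k l x hp0 hp1 hkxl
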